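/- Let d ≥ 1 and let φ ∈ L²(ℝ^d) belong to the class RB, with the integer translates {φ(·−k)}_{k∈ℤ^d} orthonormal in L²(ℝ^d). Then for every p with 1 ≤ p ≤ ∞ there exists a constant C > 0 such that for every j ∈ ℤ and every f ∈ L^p(ℝ^d), the multiresolution approximation satisfies ‖P_j f‖_{L^p(ℝ^d)} ≤ C ‖f‖_{L^p(ℝ^d)}. -/

import Mathlib

open MeasureTheory Filter Topology
open scoped ENNReal NNReal

noncomputable section

abbrev Rd (d : ℕ) := EuclideanSpace ℝ (Fin d)

/-- `g_{jk}(x) = 2^{jd/2} g(2^j x − k)`. -/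
def dil (d : ℕ) (g : Rd d → ℂ) (j : ℤ) (k : Fin d → ℤ) (x : Rd d) : ℂ :=
  (((2 : ℝ) ^ (((j : ℝ) * d) / 2) : ℝ) : ℂ) * g (WithLp.toLp 2 (fun i => (2 : ℝ) ^ j * x i - (k i : ℝ)))

/-- The class RB: functions absolutely bounded (a.e.) by an integrable radial
nonincreasing function. -/
def RB (d : ℕ) (g : Rd d → ℂ) : Prop :=
  ∃ η : ℝ → ℝ, (∀ r, 0 ≤ η r) ∧ AntitoneOn η (Set.Ici 0) ∧
    Integrable (fun x : Rd d => η ‖x‖) ∧ ∀ᵐ x : Rd d, ‖g x‖ ≤ η ‖x‖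

/-- The multiresolution approximation `P_j f`, given pointwise by
`P_j f(x) = Σ_k (∫ f(y) conj(φ_{jk}(y)) dy) φ_{jk}(x)`. -/
def mraApprox (d : ℕ) (φ : Rd d → ℂ) (j : ℤ) (f : Rd d → ℂ) (x : Rd d) : ℂ :=
  ∑' k : Fin d → ℤ, (∫ y : Rd d, f y * (starRingEnd ℂ) (dil d φ j k y)) * dil d φ j k x


namespace MRAAux

variable {d : ℕ}

/-- Integer lattice point as a vector. -/
def kv (k : Fin d → ℤ) : Rd d := WithLp.toLp 2 (fun i => (k i : ℝ))

lemma lint_comp_mp {T : Rd d → Rd d} (hT : MeasurePreserving T (volume : Measure (Rd d)) volume)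
    {f : Rd d → ℝ≥0∞} (hf : AEMeasurable f volume) :
    ∫⁻ x, f (T x) = ∫⁻ x, f x := by
  rw [← lintegral_map' (by rwa [hT.map_eq]) hT.aemeasurable, hT.map_eq]

lemma lint_smul (c : ℝ) (hc : c ≠ 0) {f : Rd d → ℝ≥0∞} (hf : AEMeasurable f volume) :
    ∫⁻ x : Rd d, f (c • x) = ENNReal.ofReal |(c ^ d)⁻¹| * ∫⁻ x, f x := by
  have h := Measure.map_addHaar_smul (volume : Measure (Rd d)) hc
  rw [← lintegral_map' (by rw [h]; exact hf.smul_measure _)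
    (measurable_const_smul c).aemeasurable, h, lintegral_smul_measure,
    finrank_euclideanSpace_fin, smul_eq_mul]

/-- `L^p`-type norm of an `ℝ≥0∞`-valued function. -/
def MpNorm (p : ℝ≥0∞) (T : Rd d → ℝ≥0∞) : ℝ≥0∞ :=
  if p = ∞ then essSup T volume else (∫⁻ x, (T x) ^ p.toReal) ^ (1 / p.toReal)

lemma eLpNorm_le_MpNorm {G : Rd d → ℂ} {T : Rd d → ℝ≥0∞} {p : ℝ≥0∞} (hp : 1 ≤ p)
    (hb : ∀ᵐ x ∂(volume : Measure (Rd d)), (‖G x‖₊ : ℝ≥0∞) ≤ T x) :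
    eLpNorm G p volume ≤ MpNorm p T := by
  have hp0 : p ≠ 0 := by positivity
  rcases eq_or_ne p ∞ with hptop | hptop
  · rw [hptop, eLpNorm_exponent_top, MpNorm, if_pos rfl]
    exact essSup_mono_ae hb
  · rw [eLpNorm_eq_lintegral_rpow_enorm_toReal hp0 hptop, MpNorm, if_neg hptop]
    refine ENNReal.rpow_le_rpow (lintegral_mono_ae ?_) (by positivity)
    filter_upwards [hb] with x hx
    exact ENNReal.rpow_le_rpow hx ENNReal.toReal_nonneg
lemma MpNorm_nnnorm {f : Rd d → ℂ} {p : ℝ≥0∞} (hp : 1 ≤ p) :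
    MpNorm p (fun x => (‖f x‖₊ : ℝ≥0∞)) = eLpNorm f p volume := by
  have hp0 : p ≠ 0 := by positivity
  rcases eq_or_ne p ∞ with hptop | hptop
  · rw [hptop, eLpNorm_exponent_top, MpNorm, if_pos rfl]; rfl
  · rw [eLpNorm_eq_lintegral_rpow_enorm_toReal hp0 hptop, MpNorm, if_neg hptop]; rfl

lemma MpNorm_zero {p : ℝ≥0∞} (hp : 1 ≤ p) : MpNorm p (fun _ : Rd d => 0) = 0 := by
  have h1 : (0:ℝ) < p.toReal ∨ p = ∞ := by
    rcases eq_or_ne p ∞ with h | h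
    · exact Or.inr h
    · exact Or.inl (ENNReal.toReal_pos (by positivity) h)
  rcases h1 with h | h
  · rw [MpNorm, if_neg (fun hc => by rw [hc] at h; simp at h)]
    rw [lintegral_congr (fun x => ENNReal.zero_rpow_of_pos h), lintegral_zero,
      ENNReal.zero_rpow_of_pos (by positivity)]
  · rw [MpNorm, if_pos h]
    exact le_antisymm (essSup_le_of_ae_le 0 (Eventually.of_forall fun _ => le_rfl)) zero_le

lemma MpNorm_pos_of_ne_zero {p : ℝ≥0∞} (hp : 1 ≤ p) {F : Rd d → ℝ≥0∞}
    (hF : AEMeasurable F volume) (h0 : ¬ F =ᶠ[ae (volume : Measure (Rd d))] 0) :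
    MpNorm p F ≠ 0 := by
  intro hM
  apply h0
  rcases eq_or_ne p ∞ with hptop | hptop
  · rw [MpNorm, if_pos hptop] at hM
    exact (ENNReal.ae_le_essSup F).mono fun y hy => le_antisymm (by simpa [hM] using hy) zero_le
  · have hrpos : 0 < p.toReal := ENNReal.toReal_pos (by positivity) hptop
    rw [MpNorm, if_neg hptop, ENNReal.rpow_eq_zero_iff] at hM
    have hint : ∫⁻ x, F x ^ p.toReal = 0 := by
      rcases hM with ⟨h, _⟩ | ⟨_, h⟩
      · exact h
      · exfalso; simp at h; linarith [h, one_div_pos.2 hrpos]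
    have := (lintegral_eq_zero_iff' (hF.pow_const _)).1 hint
    filter_upwards [this] with x hx
    simpa [ENNReal.rpow_eq_zero_iff, hrpos, not_lt.2 hrpos.le] using hx

end MRAAux

namespace MRAAux

variable {d : ℕ}

lemma young {p : ℝ≥0∞} (hp : 1 ≤ p) (h F : Rd d → ℝ≥0∞)
    (hh : AEMeasurable h (volume : Measure (Rd d))) (hF : AEMeasurable F volume) :
    MpNorm p (fun x => ∫⁻ y, h (x - y) * F y) ≤ (∫⁻ u, h u) * MpNorm p F := by
  set T1 : ℝ≥0∞ := ∫⁻ u, h u with hT1def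
  have hsub : ∀ x : Rd d, ∫⁻ y, h (x - y) = T1 := fun x =>
    lint_comp_mp (Measure.measurePreserving_sub_left volume x) hh
  have hsub' : ∀ y : Rd d, ∫⁻ x, h (x - y) = T1 := fun y =>
    lint_comp_mp (measurePreserving_sub_right volume y) hh
  have hxmeas : ∀ x : Rd d, AEMeasurable (fun y => h (x - y)) volume := fun x =>
    hh.comp_quasiMeasurePreserving
      (Measure.measurePreserving_sub_left volume x).quasiMeasurePreserving
  have hymeas : ∀ y : Rd d, AEMeasurable (fun x => h (x - y)) volume := fun y =>
    hh.comp_quasiMeasurePreserving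
      (measurePreserving_sub_right volume y).quasiMeasurePreserving
  have hprod : AEMeasurable (fun z : Rd d × Rd d => h (z.1 - z.2))
      ((volume : Measure (Rd d)).prod volume) :=
    hh.comp_quasiMeasurePreserving (quasiMeasurePreserving_sub_of_right_invariant volume volume)
  have hFprod : AEMeasurable (fun z : Rd d × Rd d => F z.2)
      ((volume : Measure (Rd d)).prod volume) :=
    hF.comp_quasiMeasurePreserving Measure.quasiMeasurePreserving_snd
  -- trivial case : F vanishes a.e.
  by_cases hF0 : F =ᶠ[ae (volume : Measure (Rd d))] 0
  · have hz : ∀ x : Rd d, ∫⁻ y, h (x - y) * F y = 0 := by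
      intro x
      rw [← lintegral_zero]
      refine lintegral_congr_ae ?_
      filter_upwards [hF0] with y hy
      simp [hy]
    calc MpNorm p (fun x => ∫⁻ y, h (x - y) * F y) = MpNorm p (fun _ : Rd d => 0) := by
          simp only [hz]
      _ = 0 := MpNorm_zero hp
      _ ≤ _ := zero_le
  -- trivial case : h integrates to 0
  by_cases hT0 : T1 = 0
  · have hz : ∀ x : Rd d, ∫⁻ y, h (x - y) * F y = 0 := by
      intro x
      have : ∫⁻ y, h (x - y) * F y ≤ ∫⁻ y, ⊤ * h (x - y) := by
        refine lintegral_mono fun y => ?_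
        rw [mul_comm]
        exact mul_le_mul_left le_top _
      rw [lintegral_const_mul'' ⊤ (hxmeas x), hsub x, hT0, mul_zero] at this
      exact le_antisymm this zero_le
    calc MpNorm p (fun x => ∫⁻ y, h (x - y) * F y) = MpNorm p (fun _ : Rd d => 0) := by
          simp only [hz]
      _ = 0 := MpNorm_zero hp
      _ ≤ _ := zero_le
  -- trivial case : h has infinite integral
  by_cases hTtop : T1 = ∞
  · rw [hTtop, ENNReal.top_mul (MpNorm_pos_of_ne_zero hp hF hF0)]
    exact le_top
  -- main case, split on p
  rcases eq_or_ne p ∞ with hptop | hptop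
  · -- p = ∞
    rw [MpNorm, if_pos hptop, MpNorm, if_pos hptop]
    set M : ℝ≥0∞ := essSup F volume with hMdef
    rcases eq_or_ne M ∞ with hMtop | hMtop
    · rw [hMtop, ENNReal.mul_top hT0]; exact le_top
    refine essSup_le_of_ae_le (T1 * M) (Eventually.of_forall fun x => ?_)
    calc ∫⁻ y, h (x - y) * F y ≤ ∫⁻ y, h (x - y) * M := by
          refine lintegral_mono_ae ?_
          filter_upwards [ENNReal.ae_le_essSup F] with y hy
          exact mul_le_mul_right hy _
      _ = T1 * M := by rw [lintegral_mul_const' M _ hMtop, hsub x]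
  -- now p < ∞
  have hr1 : 1 ≤ p.toReal := by
    rw [← ENNReal.toReal_one]
    exact ENNReal.toReal_mono hptop hp
  have hr0 : 0 < p.toReal := lt_of_lt_of_le zero_lt_one hr1
  rcases eq_or_lt_of_le hr1 with hr1' | hr1'
  · -- p = 1 (toReal = 1)
    rw [MpNorm, if_neg hptop, MpNorm, if_neg hptop, ← hr1']
    simp only [ENNReal.rpow_one, one_div_one]
    calc ∫⁻ x, ∫⁻ y, h (x - y) * F y
        = ∫⁻ y, ∫⁻ x, h (x - y) * F y := lintegral_lintegral_swap (hprod.mul hFprod)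
      _ = ∫⁻ y, T1 * F y := by
          refine lintegral_congr fun y => ?_
          rw [lintegral_mul_const'' (F y) (hymeas y), hsub' y]
      _ = T1 * ∫⁻ y, F y := lintegral_const_mul' _ _ hTtop
      _ ≤ T1 * ∫⁻ x, F x := le_rfl
  · -- 1 < p.toReal
    set r := p.toReal with hrdef
    set q := Real.conjExponent r with hqdef
    have hpq : r.HolderConjugate q := Real.HolderConjugate.conjExponent hr1'
    have hq0 : q ≠ 0 := ne_of_gt hpq.symm.pos
    have hrne : r ≠ 0 := ne_of_gt hr0
    have key : ∀ x : Rd d, (∫⁻ y, h (x - y) * F y)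
        ≤ T1 ^ q⁻¹ * (∫⁻ y, h (x - y) * F y ^ r) ^ (r⁻¹) := by
      intro x
      have hsplit : (fun y => h (x - y) * F y)
          = fun y => ((fun y => h (x - y) ^ q⁻¹) * fun y => h (x - y) ^ r⁻¹ * F y) y := by
        funext y
        simp only [Pi.mul_apply]
        rw [← mul_assoc, ← ENNReal.rpow_add_of_nonneg _ _
          (le_of_lt (inv_pos.2 hpq.symm.pos)) (le_of_lt (inv_pos.2 hpq.pos))]
        rw [hpq.symm.inv_add_inv_eq_one, ENNReal.rpow_one]
      calc ∫⁻ y, h (x - y) * F y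
          = ∫⁻ y, ((fun y => h (x - y) ^ q⁻¹) * fun y => h (x - y) ^ r⁻¹ * F y) y := by
            rw [hsplit]
        _ ≤ (∫⁻ y, (h (x - y) ^ q⁻¹) ^ q) ^ (1/q) * (∫⁻ y, (h (x - y) ^ r⁻¹ * F y) ^ r) ^ (1/r) :=
            ENNReal.lintegral_mul_le_Lp_mul_Lq volume hpq.symm
              ((hxmeas x).pow_const _) (((hxmeas x).pow_const _).mul hF)
        _ = T1 ^ q⁻¹ * (∫⁻ y, h (x - y) * F y ^ r) ^ (r⁻¹) := by
            rw [one_div, one_div]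
            congr 1
            · congr 1
              · rw [← hsub x]
                refine lintegral_congr fun y => ?_
                rw [← ENNReal.rpow_mul, inv_mul_cancel₀ hq0, ENNReal.rpow_one]
            · congr 1
              refine lintegral_congr fun y => ?_
              rw [ENNReal.mul_rpow_of_nonneg _ _ (le_of_lt hr0), ← ENNReal.rpow_mul,
                inv_mul_cancel₀ hrne, ENNReal.rpow_one]
    rw [MpNorm, if_neg hptop, MpNorm, if_neg hptop, ← hrdef]
    have hmain : ∫⁻ x, (∫⁻ y, h (x - y) * F y) ^ r
        ≤ (T1 ^ q⁻¹) ^ r * ((∫⁻ y, F y ^ r) * T1) := by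
      calc ∫⁻ x, (∫⁻ y, h (x - y) * F y) ^ r
          ≤ ∫⁻ x, (T1 ^ q⁻¹) ^ r * (∫⁻ y, h (x - y) * F y ^ r) := by
            refine lintegral_mono fun x => ?_
            calc (∫⁻ y, h (x - y) * F y) ^ r
                ≤ (T1 ^ q⁻¹ * (∫⁻ y, h (x - y) * F y ^ r) ^ (r⁻¹)) ^ r :=
                  ENNReal.rpow_le_rpow (key x) (le_of_lt hr0)
              _ = (T1 ^ q⁻¹) ^ r * (∫⁻ y, h (x - y) * F y ^ r) := by
                  rw [ENNReal.mul_rpow_of_nonneg _ _ (le_of_lt hr0),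
                    ENNReal.rpow_inv_rpow hrne]
        _ = (T1 ^ q⁻¹) ^ r * ∫⁻ x, ∫⁻ y, h (x - y) * F y ^ r :=
            lintegral_const_mul' _ _
              (ENNReal.rpow_ne_top_of_nonneg (le_of_lt hr0)
                (ENNReal.rpow_ne_top_of_nonneg (le_of_lt (inv_pos.2 hpq.symm.pos)) hTtop))
        _ = (T1 ^ q⁻¹) ^ r * ∫⁻ y, ∫⁻ x, h (x - y) * F y ^ r := by
            rw [lintegral_lintegral_swap (hprod.mul (hFprod.pow_const _))]
        _ = (T1 ^ q⁻¹) ^ r * ((∫⁻ y, F y ^ r) * T1) := by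
            congr 1
            calc ∫⁻ y, ∫⁻ x, h (x - y) * F y ^ r
                = ∫⁻ y, F y ^ r * T1 := by
                  refine lintegral_congr fun y => ?_
                  rw [lintegral_mul_const'' (F y ^ r) (hymeas y), hsub' y, mul_comm]
              _ = (∫⁻ y, F y ^ r) * T1 := lintegral_mul_const' _ _ hTtop
    calc (∫⁻ x, (∫⁻ y, h (x - y) * F y) ^ r) ^ (1/r)
        ≤ ((T1 ^ q⁻¹) ^ r * ((∫⁻ y, F y ^ r) * T1)) ^ (1/r) :=
          ENNReal.rpow_le_rpow hmain (by positivity)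
      _ = T1 * (∫⁻ y, F y ^ r) ^ (1/r) := by
          rw [ENNReal.mul_rpow_of_nonneg _ _ (by positivity : (0:ℝ) ≤ 1/r),
            ENNReal.mul_rpow_of_nonneg _ _ (by positivity : (0:ℝ) ≤ 1/r),
            one_div, ENNReal.rpow_rpow_inv hrne,
            mul_comm ((∫⁻ y, F y ^ r) ^ r⁻¹), ← mul_assoc,
            ← ENNReal.rpow_add_of_nonneg _ _
              (le_of_lt (inv_pos.2 hpq.symm.pos)) (le_of_lt (inv_pos.2 hpq.pos)),
            hpq.symm.inv_add_inv_eq_one, ENNReal.rpow_one]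

end MRAAux

namespace MRAAux

variable {d : ℕ}

/-- The unit cube based at the lattice point `k`. -/
def cube (k : Fin d → ℤ) : Set (Rd d) :=
  {z | ∀ i, (k i : ℝ) ≤ z i ∧ z i < (k i : ℝ) + 1}

lemma cube_eq (k : Fin d → ℤ) :
    cube k = (MeasurableEquiv.toLp 2 (Fin d → ℝ)).symm ⁻¹'
      (Set.univ.pi fun i => Set.Ico ((k i : ℝ)) ((k i : ℝ) + 1)) := by
  ext z
  simp [cube, Set.mem_pi, Set.mem_Ico]

lemma cube_measurable (k : Fin d → ℤ) : MeasurableSet (cube k) := by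
  rw [cube_eq]
  exact (MeasurableEquiv.toLp 2 (Fin d → ℝ)).symm.measurable
    (MeasurableSet.univ_pi fun i => measurableSet_Ico)

lemma cube_volume (k : Fin d → ℤ) : volume (cube k) = 1 := by
  rw [cube_eq,
    (EuclideanSpace.volume_preserving_symm_measurableEquiv_toLp (Fin d)).measure_preimage
      ((MeasurableSet.univ_pi fun i => measurableSet_Ico).nullMeasurableSet),
    volume_pi_pi]
  simp [Real.volume_Ico]

lemma cube_disjoint : Pairwise (Function.onFun Disjoint (cube (d := d))) := by
  intro k k' hkk'
  rw [Function.onFun, Set.disjoint_left]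
  intro z hz hz'
  apply hkk'
  funext i
  have h1 := (hz i).1
  have h2 := (hz i).2
  have h3 := (hz' i).1
  have h4 := (hz' i).2
  have e1 : k i ≤ k' i := by
    have : (k i : ℝ) < (k' i : ℝ) + 1 := lt_of_le_of_lt h1 h4
    exact_mod_cast Int.lt_add_one_iff.1 (by exact_mod_cast this)
  have e2 : k' i ≤ k i := by
    have : (k' i : ℝ) < (k i : ℝ) + 1 := lt_of_le_of_lt h3 h2
    exact_mod_cast Int.lt_add_one_iff.1 (by exact_mod_cast this)
  exact le_antisymm e1 e2

lemma cube_dist {k : Fin d → ℤ} {z : Rd d} (hz : z ∈ cube k) :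
    ‖z - kv k‖ ≤ Real.sqrt d := by
  rw [EuclideanSpace.norm_eq]
  refine Real.sqrt_le_sqrt ?_
  have : ∀ i, ‖(z - kv k) i‖ ^ 2 ≤ 1 := by
    intro i
    have h1 := (hz i).1
    have h2 := (hz i).2
    have : |z i - (k i : ℝ)| ≤ 1 := abs_le.2 ⟨by linarith, by linarith⟩
    calc ‖(z - kv k) i‖ ^ 2 = |z i - (k i : ℝ)| ^ 2 := by simp [kv, Real.norm_eq_abs]
      _ ≤ 1 ^ 2 := by exact pow_le_pow_left₀ (abs_nonneg _) this 2
      _ = 1 := one_pow 2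
  calc (∑ i, ‖(z - kv k) i‖ ^ 2) ≤ ∑ _i : Fin d, (1 : ℝ) :=
        Finset.sum_le_sum fun i _ => this i
    _ = d := by simp

/-- Lattice sum bound: the sum of a radial nonincreasing function over integer
translates is bounded by an integral. -/
lemma lattice_sum (η : ℝ → ℝ) (hmono : Antitone η) (u : Rd d) :
    ∑' k : Fin d → ℤ, ENNReal.ofReal (η ‖u - kv k‖)
      ≤ ∫⁻ z : Rd d, ENNReal.ofReal (η (‖z‖ - Real.sqrt d)) := by
  have hηmeas : Measurable η := hmono.measurable
  have hmeas : Measurable fun z : Rd d => ENNReal.ofReal (η (‖u - z‖ - Real.sqrt d)) :=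
    (hηmeas.comp ((measurable_const.sub measurable_id').norm.sub measurable_const)).ennreal_ofReal
  have hterm : ∀ k, ENNReal.ofReal (η ‖u - kv k‖)
      ≤ ∫⁻ z in cube k, ENNReal.ofReal (η (‖u - z‖ - Real.sqrt d)) := by
    intro k
    have hconst : ENNReal.ofReal (η ‖u - kv k‖)
        = ∫⁻ _z in cube k, ENNReal.ofReal (η ‖u - kv k‖) := by
      rw [setLIntegral_const, cube_volume, mul_one]
    rw [hconst]
    refine setLIntegral_mono hmeas fun z hz => ENNReal.ofReal_le_ofReal (hmono ?_)
    have h1 : ‖u - z‖ ≤ ‖u - kv k‖ + ‖z - kv k‖ := by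
      have := norm_sub_le (u - kv k) (z - kv k)
      rwa [sub_sub_sub_cancel_right] at this
    have h2 := cube_dist hz
    linarith
  calc ∑' k : Fin d → ℤ, ENNReal.ofReal (η ‖u - kv k‖)
      ≤ ∑' k : Fin d → ℤ, ∫⁻ z in cube k, ENNReal.ofReal (η (‖u - z‖ - Real.sqrt d)) :=
        ENNReal.tsum_le_tsum hterm
    _ = ∫⁻ z in ⋃ k, cube k, ENNReal.ofReal (η (‖u - z‖ - Real.sqrt d)) :=
        (lintegral_iUnion cube_measurable cube_disjoint _).symm
    _ ≤ ∫⁻ z : Rd d, ENNReal.ofReal (η (‖u - z‖ - Real.sqrt d)) :=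
        setLIntegral_le_lintegral _ _
    _ = ∫⁻ z : Rd d, ENNReal.ofReal (η (‖z‖ - Real.sqrt d)) :=
        lint_comp_mp (Measure.measurePreserving_sub_left volume u)
          ((hηmeas.comp (measurable_norm.sub measurable_const)).ennreal_ofReal).aemeasurable

lemma S_lt_top (η : ℝ → ℝ) (hmono : Antitone η)
    (hint : Integrable (fun x : Rd d => η ‖x‖) volume) :
    ∫⁻ z : Rd d, ENNReal.ofReal (η (‖z‖ - Real.sqrt d)) < ∞ := by
  have hηmeas : Measurable η := hmono.measurable
  set B := Metric.ball (0 : Rd d) (2 * Real.sqrt d) with hB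
  have hsplit := lintegral_add_compl (μ := (volume : Measure (Rd d)))
    (fun z : Rd d => ENNReal.ofReal (η (‖z‖ - Real.sqrt d)))
    (measurableSet_ball (x := (0 : Rd d)) (ε := 2 * Real.sqrt d))
  rw [← hsplit]
  have h1 : ∫⁻ z in B, ENNReal.ofReal (η (‖z‖ - Real.sqrt d)) < ∞ := by
    have hb : ∀ z ∈ B, ENNReal.ofReal (η (‖z‖ - Real.sqrt d))
        ≤ ENNReal.ofReal (η (- Real.sqrt d)) := by
      intro z _
      exact ENNReal.ofReal_le_ofReal (hmono (by have := norm_nonneg z; linarith))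
    calc ∫⁻ z in B, ENNReal.ofReal (η (‖z‖ - Real.sqrt d))
        ≤ ∫⁻ _z in B, ENNReal.ofReal (η (- Real.sqrt d)) :=
          setLIntegral_mono measurable_const hb
      _ = ENNReal.ofReal (η (- Real.sqrt d)) * volume B := setLIntegral_const _ _
      _ < ∞ := ENNReal.mul_lt_top ENNReal.ofReal_lt_top measure_ball_lt_top
  have h2 : ∫⁻ z in Bᶜ, ENNReal.ofReal (η (‖z‖ - Real.sqrt d)) < ∞ := by
    have hb : ∀ z ∈ Bᶜ, ENNReal.ofReal (η (‖z‖ - Real.sqrt d))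
        ≤ ENNReal.ofReal (η ‖(2:ℝ)⁻¹ • z‖) := by
      intro z hz
      have hz' : 2 * Real.sqrt d ≤ ‖z‖ := by
        have := hz
        simp only [hB, Set.mem_compl_iff, Metric.mem_ball, dist_zero_right, not_lt] at this
        exact this
      have hs : (0:ℝ) ≤ Real.sqrt d := Real.sqrt_nonneg d
      have hnorm : ‖(2:ℝ)⁻¹ • z‖ = ‖z‖ / 2 := by
        rw [norm_smul, Real.norm_eq_abs]
        rw [abs_of_pos (by norm_num : (0:ℝ) < 2⁻¹)]
        ring
      rw [hnorm]
      exact ENNReal.ofReal_le_ofReal (hmono (by linarith))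
    calc ∫⁻ z in Bᶜ, ENNReal.ofReal (η (‖z‖ - Real.sqrt d))
        ≤ ∫⁻ z in Bᶜ, ENNReal.ofReal (η ‖(2:ℝ)⁻¹ • z‖) := setLIntegral_mono
          ((hηmeas.comp ((measurable_id'.const_smul ((2:ℝ)⁻¹)).norm)).ennreal_ofReal) hb
      _ ≤ ∫⁻ z : Rd d, ENNReal.ofReal (η ‖(2:ℝ)⁻¹ • z‖) := setLIntegral_le_lintegral _ _
      _ = ENNReal.ofReal |(((2:ℝ)⁻¹) ^ d)⁻¹| * ∫⁻ z : Rd d, ENNReal.ofReal (η ‖z‖) :=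
          lint_smul _ (by norm_num) ((hηmeas.comp measurable_norm).ennreal_ofReal).aemeasurable
      _ < ∞ := ENNReal.mul_lt_top ENNReal.ofReal_lt_top hint.lintegral_lt_top
  exact ENNReal.add_lt_top.2 ⟨h1, h2⟩

lemma kernel_sum (η : ℝ → ℝ) (hmono : Antitone η) (hnn : ∀ r, 0 ≤ η r) (u v : Rd d) :
    ∑' k : Fin d → ℤ, ENNReal.ofReal (η ‖v - kv k‖) * ENNReal.ofReal (η ‖u - kv k‖)
      ≤ 2 * (∫⁻ z : Rd d, ENNReal.ofReal (η (‖z‖ - Real.sqrt d)))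
          * ENNReal.ofReal (η (‖u - v‖ / 2)) := by
  set S := ∫⁻ z : Rd d, ENNReal.ofReal (η (‖z‖ - Real.sqrt d)) with hS
  have hterm : ∀ k : Fin d → ℤ,
      ENNReal.ofReal (η ‖v - kv k‖) * ENNReal.ofReal (η ‖u - kv k‖)
        ≤ ENNReal.ofReal (η (‖u - v‖ / 2))
            * (ENNReal.ofReal (η ‖v - kv k‖) + ENNReal.ofReal (η ‖u - kv k‖)) := by
    intro k
    have htri : ‖u - v‖ ≤ ‖u - kv k‖ + ‖v - kv k‖ := by
      have := norm_sub_le (u - kv k) (v - kv k)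
      rwa [sub_sub_sub_cancel_right] at this
    rcases le_total (‖u - v‖ / 2) (‖u - kv k‖) with hc | hc
    · calc ENNReal.ofReal (η ‖v - kv k‖) * ENNReal.ofReal (η ‖u - kv k‖)
          ≤ ENNReal.ofReal (η ‖v - kv k‖) * ENNReal.ofReal (η (‖u - v‖ / 2)) :=
            mul_le_mul_right (ENNReal.ofReal_le_ofReal (hmono hc)) _
        _ = ENNReal.ofReal (η (‖u - v‖ / 2)) * ENNReal.ofReal (η ‖v - kv k‖) := mul_comm _ _
        _ ≤ _ := mul_le_mul_right le_self_add _
    · have hc' : ‖u - v‖ / 2 ≤ ‖v - kv k‖ := by linarith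
      calc ENNReal.ofReal (η ‖v - kv k‖) * ENNReal.ofReal (η ‖u - kv k‖)
          ≤ ENNReal.ofReal (η (‖u - v‖ / 2)) * ENNReal.ofReal (η ‖u - kv k‖) :=
            mul_le_mul_left (ENNReal.ofReal_le_ofReal (hmono hc')) _
        _ ≤ _ := mul_le_mul_right le_add_self _
  calc ∑' k : Fin d → ℤ, ENNReal.ofReal (η ‖v - kv k‖) * ENNReal.ofReal (η ‖u - kv k‖)
      ≤ ∑' k : Fin d → ℤ, ENNReal.ofReal (η (‖u - v‖ / 2))
          * (ENNReal.ofReal (η ‖v - kv k‖) + ENNReal.ofReal (η ‖u - kv k‖)) :=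
        ENNReal.tsum_le_tsum hterm
    _ = ENNReal.ofReal (η (‖u - v‖ / 2))
        * ((∑' k : Fin d → ℤ, ENNReal.ofReal (η ‖v - kv k‖))
          + ∑' k : Fin d → ℤ, ENNReal.ofReal (η ‖u - kv k‖)) := by
        rw [ENNReal.tsum_mul_left, ENNReal.tsum_add]
    _ ≤ ENNReal.ofReal (η (‖u - v‖ / 2)) * (S + S) := by
        gcongr
        · exact lattice_sum η hmono v
        · exact lattice_sum η hmono u
    _ = 2 * S * ENNReal.ofReal (η (‖u - v‖ / 2)) := by ring

end MRAAux

namespace MRAAux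

lemma nnnorm_tsum_le {ι : Type*} [Countable ι] (a : ι → ℂ) :
    (‖∑' i, a i‖₊ : ℝ≥0∞) ≤ ∑' i, (‖a i‖₊ : ℝ≥0∞) := by
  by_cases h : Summable a
  · have hs : Summable fun i => ‖a i‖ := summable_norm_iff.2 h
    calc (‖∑' i, a i‖₊ : ℝ≥0∞) = ENNReal.ofReal ‖∑' i, a i‖ :=
          (ofReal_norm _).symm
      _ ≤ ENNReal.ofReal (∑' i, ‖a i‖) :=
          ENNReal.ofReal_le_ofReal (norm_tsum_le_tsum_norm hs)
      _ = ∑' i, ENNReal.ofReal ‖a i‖ :=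
          ENNReal.ofReal_tsum_of_nonneg (fun i => norm_nonneg _) hs
      _ = ∑' i, (‖a i‖₊ : ℝ≥0∞) := by
          simp only [ofReal_norm, enorm_eq_nnnorm]
  · rw [tsum_eq_zero_of_not_summable h]
    simp

end MRAAux


open MRAAux

/-- If `φ ∈ L²(ℝ^d) ∩ RB` has orthonormal integer translates, then for
every `p` with `1 ≤ p ≤ ∞` the operators `P_j` are bounded on `L^p`, uniformly in `j`. -/
theorem mra_projection_Lp_bounded (d : ℕ) (hd : 1 ≤ d) (φ : Rd d → ℂ)
    (hL2 : MemLp φ 2 volume) (hRB : RB d φ)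
    (horth : ∀ k k' : Fin d → ℤ,
      (∫ x : Rd d, φ (WithLp.toLp 2 (fun i => x i - (k i : ℝ))) *
        (starRingEnd ℂ) (φ (WithLp.toLp 2 (fun i => x i - (k' i : ℝ))))) = if k = k' then 1 else 0)
    (p : ENNReal) (hp : 1 ≤ p) :
    ∃ C : ℝ, 0 < C ∧ ∀ j : ℤ, ∀ f : Rd d → ℂ, MemLp f p volume →
      eLpNorm (fun x => mraApprox d φ j f x) p volume ≤
        ENNReal.ofReal C * eLpNorm f p volume := by
  classical
  obtain ⟨η₀, hη₀nn, hη₀mono, hη₀int, hη₀bdd⟩ := hRB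
  set η : ℝ → ℝ := fun r => η₀ (max r 0) with hηdef
  have hmono : Antitone η := fun a b hab =>
    hη₀mono (Set.mem_Ici.2 (le_max_right _ _)) (Set.mem_Ici.2 (le_max_right _ _))
      (max_le_max hab le_rfl)
  have hnn : ∀ r, 0 ≤ η r := fun r => hη₀nn _
  have hηnorm : ∀ x : Rd d, η ‖x‖ = η₀ ‖x‖ := fun x => by
    simp only [hηdef]; rw [max_eq_left (norm_nonneg x)]
  have hint : Integrable (fun x : Rd d => η ‖x‖) volume := by
    rw [show (fun x : Rd d => η ‖x‖) = fun x : Rd d => η₀ ‖x‖ from funext hηnorm]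
    exact hη₀int
  have hbdd : ∀ᵐ x : Rd d, ‖φ x‖ ≤ η ‖x‖ := hη₀bdd.mono fun x hx => by rw [hηnorm]; exact hx
  have hηmeas : Measurable η := hmono.measurable
  -- the uniform constants
  set S := ∫⁻ z : Rd d, ENNReal.ofReal (η (‖z‖ - Real.sqrt d)) with hSdef
  have hSfin : S < ∞ := S_lt_top η hmono hint
  set g : Rd d → ℝ≥0∞ := fun u => ENNReal.ofReal (η (‖u‖ / 2)) with hgdef
  have hgmeas : Measurable g := (hηmeas.comp (measurable_norm.div_const 2)).ennreal_ofReal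
  set T2 := ∫⁻ u : Rd d, g u with hT2def
  have hT2fin : T2 < ∞ := by
    have h1 : T2 = ∫⁻ u : Rd d, ENNReal.ofReal (η ‖(2:ℝ)⁻¹ • u‖) := by
      refine lintegral_congr fun u => ?_
      rw [hgdef]
      congr 2
      rw [norm_smul, Real.norm_eq_abs, abs_of_pos (by norm_num : (0:ℝ) < 2⁻¹)]
      ring
    rw [h1, lint_smul (f := fun z : Rd d => ENNReal.ofReal (η ‖z‖)) _
      (by norm_num : ((2:ℝ)⁻¹) ≠ 0)
      ((hηmeas.comp measurable_norm).ennreal_ofReal).aemeasurable]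
    exact ENNReal.mul_lt_top ENNReal.ofReal_lt_top hint.lintegral_lt_top
  have hAfin : 2 * S * T2 ≠ ∞ :=
    (ENNReal.mul_lt_top (ENNReal.mul_lt_top (by norm_num) hSfin) hT2fin).ne
  refine ⟨(2 * S * T2).toReal + 1, by positivity, ?_⟩
  intro j f hf
  -- scale factor for this level
  set c : ℝ := (2:ℝ) ^ (((j:ℝ) * d) / 2) with hcdef
  have hcpos : 0 < c := Real.rpow_pos_of_pos two_pos _
  have h2jne : ((2:ℝ) ^ j) ≠ 0 := zpow_ne_zero _ two_ne_zero
  -- the affine maps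
  set Tk : (Fin d → ℤ) → Rd d → Rd d := fun k x => (2:ℝ) ^ j • x - kv k with hTkdef
  have hTkQMP : ∀ k, Measure.QuasiMeasurePreserving (Tk k)
      (volume : Measure (Rd d)) volume := by
    intro k
    have h1 := Measure.quasiMeasurePreserving_smul (volume : Measure (Rd d)) h2jne
    have h2 := (measurePreserving_add_right (volume : Measure (Rd d))
      (-(kv k))).quasiMeasurePreserving
    have h3 := h2.comp h1
    have : Tk k = (fun x : Rd d => x + -(kv k)) ∘ (fun x : Rd d => (2:ℝ) ^ j • x) := by
      funext x
      simp [hTkdef, sub_eq_add_neg, Function.comp]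
    rwa [← this] at h3
  have hdilTk : ∀ (k : Fin d → ℤ) (x : Rd d), dil d φ j k x = ((c : ℝ) : ℂ) * φ (Tk k x) :=
    fun k x => by
      show _ * φ _ = _ * φ _
      congr 2
  have hnnorm_dil : ∀ (k : Fin d → ℤ) (x : Rd d),
      (‖dil d φ j k x‖₊ : ℝ≥0∞) = ENNReal.ofReal c * (‖φ (Tk k x)‖₊ : ℝ≥0∞) := by
    intro k x
    rw [hdilTk k x, nnnorm_mul, ENNReal.coe_mul, Complex.nnnorm_real,
      ← enorm_eq_nnnorm, Real.enorm_eq_ofReal hcpos.le]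
  -- the exceptional null set
  obtain ⟨N, hNsub, _hNmeas, hNnull⟩ := exists_measurable_superset_of_null (ae_iff.mp hbdd)
  set B := ⋃ k : Fin d → ℤ, (Tk k) ⁻¹' N with hBdef
  have hBnull : volume B = 0 := measure_iUnion_null fun k => (hTkQMP k).preimage_null hNnull
  have hBae : ∀ᵐ x : Rd d, x ∉ B := measure_eq_zero_iff_ae_notMem.mp hBnull
  have hgoodx : ∀ x, x ∉ B → ∀ k, (‖φ (Tk k x)‖₊ : ℝ≥0∞) ≤ ENNReal.ofReal (η ‖Tk k x‖) := by
    intro x hx k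
    have hmem : Tk k x ∉ N := fun h => hx (Set.mem_iUnion.2 ⟨k, h⟩)
    have hb : ‖φ (Tk k x)‖ ≤ η ‖Tk k x‖ := by
      by_contra hcon
      exact hmem (hNsub hcon)
    calc (‖φ (Tk k x)‖₊ : ℝ≥0∞) = ENNReal.ofReal ‖φ (Tk k x)‖ :=
        (ofReal_norm _).symm
      _ ≤ ENNReal.ofReal (η ‖Tk k x‖) := ENNReal.ofReal_le_ofReal hb
  -- measurability bits
  have hφm : AEStronglyMeasurable φ (volume : Measure (Rd d)) := hL2.aestronglyMeasurable
  have hfm : AEMeasurable (fun y : Rd d => (‖f y‖₊ : ℝ≥0∞)) volume :=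
    hf.aestronglyMeasurable.enorm
  have hdilm : ∀ k, AEMeasurable (fun y : Rd d => (‖dil d φ j k y‖₊ : ℝ≥0∞)) volume := by
    intro k
    have h1 : AEMeasurable (fun y : Rd d => (‖φ (Tk k y)‖₊ : ℝ≥0∞)) volume :=
      hφm.enorm.comp_quasiMeasurePreserving (hTkQMP k)
    have : (fun y : Rd d => (‖dil d φ j k y‖₊ : ℝ≥0∞))
        = fun y => ENNReal.ofReal c * (‖φ (Tk k y)‖₊ : ℝ≥0∞) := funext fun y => hnnorm_dil k y
    rw [this]
    exact h1.const_mul _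
  -- the convolution kernel bound
  set kb : Rd d → ℝ≥0∞ :=
    fun u => (2 * S) * (ENNReal.ofReal (c ^ 2) * g ((2:ℝ) ^ j • u)) with hkbdef
  have hkbmeas : Measurable kb :=
    ((hgmeas.comp (measurable_const_smul ((2:ℝ) ^ j))).const_mul _).const_mul _
  have hc2 : ENNReal.ofReal (c ^ 2) * ENNReal.ofReal |(((2:ℝ) ^ j) ^ d)⁻¹| = 1 := by
    have hpow : ((2:ℝ) ^ j) ^ d = (2:ℝ) ^ ((j:ℝ) * d) := by
      rw [show ((2:ℝ) ^ j) = (2:ℝ) ^ ((j:ℝ)) from (Real.rpow_intCast 2 j).symm,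
        ← Real.rpow_natCast ((2:ℝ) ^ ((j:ℝ))) d, ← Real.rpow_mul (by norm_num)]
    have hc2' : c ^ 2 = (2:ℝ) ^ ((j:ℝ) * d) := by
      rw [hcdef, sq, ← Real.rpow_add two_pos]
      ring_nf
    have hppos : (0:ℝ) < (2:ℝ) ^ ((j:ℝ) * d) := Real.rpow_pos_of_pos two_pos _
    rw [hc2', hpow, abs_of_pos (by positivity), ← ENNReal.ofReal_mul hppos.le,
      mul_inv_cancel₀ hppos.ne']
    simp
  have hscale : ∫⁻ u : Rd d, ENNReal.ofReal (c ^ 2) * g ((2:ℝ) ^ j • u) = T2 := by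
    rw [lintegral_const_mul' _ _ ENNReal.ofReal_ne_top,
      lint_smul _ h2jne hgmeas.aemeasurable, ← mul_assoc, hc2, one_mul]
  have hkbint : ∫⁻ u, kb u = 2 * S * T2 := by
    rw [hkbdef]
    rw [lintegral_const_mul' _ _ (ENNReal.mul_lt_top (by norm_num) hSfin).ne, hscale]
  -- pointwise domination of the MRA projection by the convolution kernel
  have hdom : ∀ᵐ x : Rd d, (‖mraApprox d φ j f x‖₊ : ℝ≥0∞)
      ≤ ∫⁻ y, kb (x - y) * (‖f y‖₊ : ℝ≥0∞) := by
    filter_upwards [hBae] with x hx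
    have step1 : (‖mraApprox d φ j f x‖₊ : ℝ≥0∞)
        ≤ ∫⁻ y, (‖f y‖₊ : ℝ≥0∞) *
            ∑' k : Fin d → ℤ, ((‖dil d φ j k y‖₊ : ℝ≥0∞) * ‖dil d φ j k x‖₊) := by
      calc (‖mraApprox d φ j f x‖₊ : ℝ≥0∞)
          ≤ ∑' k : Fin d → ℤ,
              (‖(∫ y, f y * (starRingEnd ℂ) (dil d φ j k y)) * dil d φ j k x‖₊ : ℝ≥0∞) :=
            nnnorm_tsum_le _
        _ ≤ ∑' k : Fin d → ℤ,
              (∫⁻ y, (‖f y‖₊ : ℝ≥0∞) * ‖dil d φ j k y‖₊) * ‖dil d φ j k x‖₊ := by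
            refine ENNReal.tsum_le_tsum fun k => ?_
            rw [nnnorm_mul, ENNReal.coe_mul]
            refine mul_le_mul_left ?_ _
            calc (‖∫ y, f y * (starRingEnd ℂ) (dil d φ j k y)‖₊ : ℝ≥0∞)
                ≤ ∫⁻ y, (‖f y * (starRingEnd ℂ) (dil d φ j k y)‖₊ : ℝ≥0∞) :=
                  enorm_integral_le_lintegral_enorm _
              _ = ∫⁻ y, (‖f y‖₊ : ℝ≥0∞) * ‖dil d φ j k y‖₊ := by
                  refine lintegral_congr fun y => ?_
                  rw [nnnorm_mul, RCLike.nnnorm_conj, ENNReal.coe_mul]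
        _ = ∑' k : Fin d → ℤ,
              ∫⁻ y, (‖f y‖₊ : ℝ≥0∞) * ‖dil d φ j k y‖₊ * ‖dil d φ j k x‖₊ :=
            tsum_congr fun k => (lintegral_mul_const' _ _ ENNReal.coe_ne_top).symm
        _ = ∫⁻ y, ∑' k : Fin d → ℤ,
              (‖f y‖₊ : ℝ≥0∞) * ‖dil d φ j k y‖₊ * ‖dil d φ j k x‖₊ :=
            (lintegral_tsum fun k => ((hfm.mul (hdilm k)).mul_const _)).symm
        _ = ∫⁻ y, (‖f y‖₊ : ℝ≥0∞) *
              ∑' k : Fin d → ℤ, ((‖dil d φ j k y‖₊ : ℝ≥0∞) * ‖dil d φ j k x‖₊) := by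
            refine lintegral_congr fun y => ?_
            rw [← ENNReal.tsum_mul_left]
            exact tsum_congr fun k => mul_assoc _ _ _
    refine step1.trans (lintegral_mono_ae ?_)
    filter_upwards [hBae] with y hy
    rw [mul_comm (kb (x - y))]
    refine mul_le_mul_right ?_ _
    have hofc2 : ENNReal.ofReal (c ^ 2) = ENNReal.ofReal c * ENNReal.ofReal c := by
      rw [sq, ENNReal.ofReal_mul hcpos.le]
    calc ∑' k : Fin d → ℤ, ((‖dil d φ j k y‖₊ : ℝ≥0∞) * ‖dil d φ j k x‖₊)
        = ENNReal.ofReal (c ^ 2) *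
            ∑' k : Fin d → ℤ, ((‖φ (Tk k y)‖₊ : ℝ≥0∞) * ‖φ (Tk k x)‖₊) := by
          rw [← ENNReal.tsum_mul_left]
          refine tsum_congr fun k => ?_
          rw [hnnorm_dil, hnnorm_dil, hofc2]
          ring
      _ ≤ ENNReal.ofReal (c ^ 2) *
            (2 * S * ENNReal.ofReal (η (‖(2:ℝ) ^ j • x - (2:ℝ) ^ j • y‖ / 2))) := by
          refine mul_le_mul_right ?_ _
          calc ∑' k : Fin d → ℤ, ((‖φ (Tk k y)‖₊ : ℝ≥0∞) * ‖φ (Tk k x)‖₊)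
              ≤ ∑' k : Fin d → ℤ, ENNReal.ofReal (η ‖(2:ℝ) ^ j • y - kv k‖)
                  * ENNReal.ofReal (η ‖(2:ℝ) ^ j • x - kv k‖) :=
                ENNReal.tsum_le_tsum fun k =>
                  mul_le_mul' (hgoodx y hy k) (hgoodx x hx k)
            _ ≤ 2 * S * ENNReal.ofReal (η (‖(2:ℝ) ^ j • x - (2:ℝ) ^ j • y‖ / 2)) :=
                kernel_sum η hmono hnn ((2:ℝ) ^ j • x) ((2:ℝ) ^ j • y)
      _ = kb (x - y) := by
          simp only [hkbdef, hgdef, smul_sub]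
          ring
  -- conclusion
  calc eLpNorm (fun x => mraApprox d φ j f x) p volume
      ≤ MpNorm p (fun x => ∫⁻ y, kb (x - y) * (‖f y‖₊ : ℝ≥0∞)) := eLpNorm_le_MpNorm hp hdom
    _ ≤ (∫⁻ u, kb u) * MpNorm p (fun y => (‖f y‖₊ : ℝ≥0∞)) :=
        young hp kb _ hkbmeas.aemeasurable hfm
    _ = (2 * S * T2) * eLpNorm f p volume := by rw [hkbint, MpNorm_nnnorm hp]
    _ ≤ ENNReal.ofReal ((2 * S * T2).toReal + 1) * eLpNorm f p volume := by
        refine mul_le_mul_left ?_ _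
        calc 2 * S * T2 = ENNReal.ofReal ((2 * S * T2).toReal) :=
              (ENNReal.ofReal_toReal hAfin).symm
          _ ≤ ENNReal.ofReal ((2 * S * T2).toReal + 1) :=
              ENNReal.ofReal_le_ofReal (by linarith)
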